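/- Let E ⊆ ℝ^d be open and bounded with |E \ E_{2ε}| ≤ Cε for all small ε > 0, where E_{2ε} = {x ∈ E : dist(x, ∂E) > 2ε}, and let s ∈ (0,1). Then ∫_{E \ E_{2ε}} ∫_{|y-x| > 2ε} |y-x|^{-d-s} dy dx ≤ (C H^{d-1}(S^{d-1})/s) · 2^{-s} · ε^{1-s}, and in particular this quantity tends to 0 as ε → 0⁺. -/

import Mathlib

/-!
Once `ε` is fixed, the inner integral does not depend on `x`: translating by `x` and passing to
polar coordinates, `∫_{|h| > 2ε} |h|^{-d-s} dh = H^{d-1}(S^{d-1}) ∫_{2ε}^∞ r^{-1-s} dr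
= H^{d-1}(S^{d-1}) (2ε)^{-s}/s`. The double integral is therefore this constant times the volume of
the collar, which is at most `Cε`; the bound is `O(ε^{1-s})` and tends to `0` because `s < 1`.
-/

open MeasureTheory Filter

/-- Surface measure of the unit sphere `S^{d-1}` in `ℝ^d`. -/
noncomputable def sphereArea (d : ℕ) : ℝ :=
  d * Real.pi ^ ((d : ℝ) / 2) / Real.Gamma ((d : ℝ) / 2 + 1)

open Set Metric Module Topology

theorem integral_Ioi_pow_mul_rpow {n : ℕ} (hn : n ≠ 0) {s R : ℝ} (hs : 0 < s) (hR : 0 < R) :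
    ∫ r in Ioi R, r ^ (n - 1) * r ^ (-(n : ℝ) - s) = R ^ (-s) / s := by
  have hexp : ∀ r ∈ Ioi R, r ^ (n - 1) * r ^ (-(n : ℝ) - s) = r ^ (-1 - s) := by
    intro r hr
    rw [← Real.rpow_natCast, ← Real.rpow_add (hR.trans hr),
      Nat.cast_pred (Nat.pos_of_ne_zero hn)]
    ring_nf
  rw [setIntegral_congr_fun measurableSet_Ioi hexp, integral_Ioi_rpow_of_lt (by linarith) hR,
    show -1 - s + 1 = -s by ring]
  field_simp

theorem setIntegral_norm_sub_rpow_of_lt {F : Type*} [NormedAddCommGroup F] [NormedSpace ℝ F]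
    [FiniteDimensional ℝ F] [MeasurableSpace F] [BorelSpace F] (μ : Measure F)
    [μ.IsAddHaarMeasure] {s R : ℝ} (hs : 0 < s) (hR : 0 < R) (x : F) :
    ∫ y in {y | R < ‖y - x‖}, ‖y - x‖ ^ (-(finrank ℝ F : ℝ) - s) ∂μ =
      finrank ℝ F * μ.real (ball 0 1) * R ^ (-s) / s := by
  rcases subsingleton_or_nontrivial F with hF | hF
  · have hempty : {y : F | R < ‖y - x‖} = ∅ := by
      ext y
      simp [Subsingleton.elim y x, hR.not_gt]
    simp [hempty, finrank_zero_of_subsingleton]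
  set n := finrank ℝ F
  set f : ℝ → ℝ := (Ioi R).indicator (· ^ (-(n : ℝ) - s))
  have hpolar : ∫ y in {y | R < ‖y - x‖}, ‖y - x‖ ^ (-(n : ℝ) - s) ∂μ =
      n * μ.real (ball 0 1) * ∫ r in Ioi R, r ^ (n - 1) * r ^ (-(n : ℝ) - s) := by
    have hradial : ∀ r, r ^ (n - 1) • f r =
        (Ioi R).indicator (fun r ↦ r ^ (n - 1) * r ^ (-(n : ℝ) - s)) r :=
      fun r ↦ ((Ioi R).indicator_mul_right _ _).symm
    calc ∫ y in {y | R < ‖y - x‖}, ‖y - x‖ ^ (-(n : ℝ) - s) ∂μ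
      _ = ∫ y, f ‖y - x‖ ∂μ :=
          (integral_indicator (measurableSet_lt measurable_const (by fun_prop))).symm
      _ = ∫ y, f ‖y‖ ∂μ := integral_sub_right_eq_self (fun y ↦ f ‖y‖) x
      _ = n • μ.real (ball 0 1) • ∫ r in Ioi 0, r ^ (n - 1) • f r :=
          integral_fun_norm_addHaar μ f
      _ = _ := by
        simp only [hradial, setIntegral_indicator measurableSet_Ioi, Ioi_inter_Ioi,
          sup_of_le_right hR.le, nsmul_eq_mul, smul_eq_mul, mul_assoc]
  rw [hpolar, integral_Ioi_pow_mul_rpow finrank_pos.ne' hs hR]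
  ring

theorem sphereArea_eq (d : ℕ) :
    sphereArea d = d * volume.real (ball (0 : EuclideanSpace ℝ (Fin d)) 1) := by
  rcases Nat.eq_zero_or_pos d with rfl | hd
  · simp [sphereArea]
  have : Nonempty (Fin d) := ⟨⟨0, hd⟩⟩
  rw [measureReal_def, EuclideanSpace.volume_ball, ENNReal.ofReal_one, one_pow, one_mul,
    ENNReal.toReal_ofReal (by positivity), Fintype.card_fin, sphereArea, Real.sqrt_eq_rpow,
    ← Real.rpow_mul_natCast Real.pi_pos.le]
  ring_nf

theorem sphereArea_nonneg (d : ℕ) : 0 ≤ sphereArea d := by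
  rw [sphereArea_eq]
  positivity

theorem setIntegral_norm_sub_rpow_of_lt_eq_sphereArea {d : ℕ} {s R : ℝ} (hs : 0 < s)
    (hR : 0 < R) (x : EuclideanSpace ℝ (Fin d)) :
    ∫ y in {y | R < ‖y - x‖}, ‖y - x‖ ^ (-(d : ℝ) - s) =
      sphereArea d * R ^ (-s) / s := by
  simpa only [finrank_euclideanSpace_fin, sphereArea_eq] using
    setIntegral_norm_sub_rpow_of_lt volume hs hR x

theorem setIntegral_setIntegral_norm_sub_rpow_le {d : ℕ} (A : Set (EuclideanSpace ℝ (Fin d)))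
    {s ε C : ℝ} (hs : 0 < s) (hε : 0 < ε) (hA : volume.real A ≤ C * ε) :
    ∫ x in A, ∫ y in {y | 2 * ε < ‖y - x‖}, ‖y - x‖ ^ (-(d : ℝ) - s) ≤
      C * sphereArea d / s * 2 ^ (-s) * ε ^ (1 - s) := by
  have hσ := sphereArea_nonneg d
  simp_rw [setIntegral_norm_sub_rpow_of_lt_eq_sphereArea hs (by positivity : 0 < 2 * ε),
    setIntegral_const, smul_eq_mul]
  calc _ ≤ C * ε * (sphereArea d * (2 * ε) ^ (-s) / s) := by gcongr
    _ = C * sphereArea d / s * 2 ^ (-s) * ε ^ (1 - s) := by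
      rw [Real.mul_rpow zero_le_two hε.le, sub_eq_add_neg, Real.rpow_add hε, Real.rpow_one]
      ring

theorem tendsto_rpow_nhdsGT_zero {r : ℝ} (hr : 0 < r) :
    Tendsto (fun x : ℝ ↦ x ^ r) (𝓝[>] 0) (𝓝 0) := by
  simpa [Real.zero_rpow hr.ne'] using
    (Real.continuousAt_rpow_const 0 r (Or.inr hr.le)).tendsto.mono_left nhdsWithin_le_nhds

theorem collar_estimate_general
    {d : ℕ} (E : Set (EuclideanSpace ℝ (Fin d)))
    (s : ℝ) (hs : s ∈ Set.Ioo (0:ℝ) 1) (C ε₀ : ℝ) (hε₀ : 0 < ε₀)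
    (hcollar : ∀ ε ∈ Set.Ioo (0:ℝ) ε₀,
      (volume (E \ {x ∈ E | 2 * ε < Metric.infDist x (frontier E)})).toReal ≤ C * ε) :
    (∀ ε ∈ Set.Ioo (0:ℝ) ε₀,
      (∫ x in E \ {x ∈ E | 2 * ε < Metric.infDist x (frontier E)},
          ∫ y in {y | 2 * ε < ‖y - x‖}, ‖y - x‖ ^ (-(d : ℝ) - s)) ≤
        C * sphereArea d / s * 2 ^ (-s) * ε ^ (1 - s)) ∧
    Tendsto (fun ε : ℝ =>
        ∫ x in E \ {x ∈ E | 2 * ε < Metric.infDist x (frontier E)},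
          ∫ y in {y | 2 * ε < ‖y - x‖}, ‖y - x‖ ^ (-(d : ℝ) - s))
      (nhdsWithin 0 (Set.Ioi 0)) (nhds 0) := by
  obtain ⟨hs0, hs1⟩ := hs
  have hbound : ∀ ε ∈ Ioo 0 ε₀, (∫ x in E \ {x ∈ E | 2 * ε < infDist x (frontier E)},
        ∫ y in {y | 2 * ε < ‖y - x‖}, ‖y - x‖ ^ (-(d : ℝ) - s)) ≤
      C * sphereArea d / s * 2 ^ (-s) * ε ^ (1 - s) := fun ε hε ↦
    setIntegral_setIntegral_norm_sub_rpow_le _ hs0 hε.1 (hcollar ε hε)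
  refine ⟨hbound, squeeze_zero' (g := fun ε ↦ C * sphereArea d / s * 2 ^ (-s) * ε ^ (1 - s))
    (Eventually.of_forall fun ε ↦ ?_) ?_ ?_⟩
  · exact integral_nonneg fun x ↦ integral_nonneg fun y ↦ by positivity
  · filter_upwards [Ioo_mem_nhdsGT hε₀] with ε hε using hbound ε hε
  · simpa using (tendsto_rpow_nhdsGT_zero (sub_pos.2 hs1)).const_mul
      (C * sphereArea d / s * 2 ^ (-s))

/-- The collar estimate: the contribution of the `2ε`-collar of `∂E` paired with points at
distance `> 2ε` is bounded by `(C H^{d-1}(S^{d-1})/s) 2^{-s} ε^{1-s}` and hence vanishes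
as `ε → 0⁺`. -/
theorem collar_estimate
    {d : ℕ} (hd : 0 < d) (E : Set (EuclideanSpace ℝ (Fin d)))
    (hEopen : IsOpen E) (hEbdd : Bornology.IsBounded E)
    (s : ℝ) (hs : s ∈ Set.Ioo (0:ℝ) 1) (C ε₀ : ℝ) (hC : 0 < C) (hε₀ : 0 < ε₀)
    (hcollar : ∀ ε ∈ Set.Ioo (0:ℝ) ε₀,
      (volume (E \ {x ∈ E | 2 * ε < Metric.infDist x (frontier E)})).toReal ≤ C * ε) :
    (∀ ε ∈ Set.Ioo (0:ℝ) ε₀,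
      (∫ x in E \ {x ∈ E | 2 * ε < Metric.infDist x (frontier E)},
          ∫ y in {y | 2 * ε < ‖y - x‖}, ‖y - x‖ ^ (-(d : ℝ) - s)) ≤
        C * sphereArea d / s * 2 ^ (-s) * ε ^ (1 - s)) ∧
    Tendsto (fun ε : ℝ =>
        ∫ x in E \ {x ∈ E | 2 * ε < Metric.infDist x (frontier E)},
          ∫ y in {y | 2 * ε < ‖y - x‖}, ‖y - x‖ ^ (-(d : ℝ) - s))
      (nhdsWithin 0 (Set.Ioi 0)) (nhds 0) :=
  collar_estimate_general E s hs C ε₀ hε₀ hcollar
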